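/- Suppose J(z) = μ(|z|) with μ strictly decreasing on [0, r] and vanishing outside, Ω measurable, and x₀, x̃₀ = R₀(x₀) with x_{0,n} < 0 < x̃_{0,n}. If every y ∈ Ω \ R₀(Ω) lies in the upper half-space {y_n > 0}, and H^J_Ω(x₀) = H^J_Ω(x̃₀), then |((Ω \ R₀(Ω)) ∩ B_r(x̃₀)| = 0. -/

import Mathlib

open MeasureTheory Set Metric

/-- The nonlocal curvature of a set `Ω` with kernel `J` at a point `x`. -/
noncomputable def nonlocalCurvature {n : ℕ} (J : EuclideanSpace ℝ (Fin n) → ℝ)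
    (Ω : Set (EuclideanSpace ℝ (Fin n))) (x : EuclideanSpace ℝ (Fin n)) : ℝ :=
  ∫ y, J (x - y) * (Set.indicator Ωᶜ (fun _ => (1 : ℝ)) y - Set.indicator Ω (fun _ => (1 : ℝ)) y)

/-- Reflection of `ℝ^{n+1}` across the hyperplane `{x_n = 0}` (the last coordinate). -/
noncomputable def reflectZero {n : ℕ} (x : EuclideanSpace ℝ (Fin (n + 1))) :
    EuclideanSpace ℝ (Fin (n + 1)) :=
  WithLp.toLp 2 (Function.update x (Fin.last n) (-(x (Fin.last n))))

/-
A radial kernel is invariant under the reflection `R`, so `H(x) - H(R x)` only sees the part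
`S = Ω \ R Ω` of `Ω` that is not symmetric: writing `H(x) = ∫ J - 2 ∫_Ω J(x - y) dy` and cancelling
the symmetric part `Ω ∩ R Ω`, one gets `H(x₀) - H(x̃₀) = 2 ∫_S (J(x̃₀ - y) - J(x₀ - y)) dy`.
Every point of `S` lies in the upper half-space, hence is strictly closer to `x̃₀` than to `x₀`;
as the profile `μ` is nonincreasing, the integrand is nonnegative, and it is positive on
`B_r(x̃₀)`, where `μ` is strictly decreasing. A vanishing integral forces `|S ∩ B_r(x̃₀)| = 0`.
-/

section Reflection

variable {n : ℕ}

lemma reflectZero_apply (x : EuclideanSpace ℝ (Fin (n + 1))) (j : Fin (n + 1)) :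
    reflectZero x j = if j = Fin.last n then -(x (Fin.last n)) else x j :=
  Function.update_apply x.ofLp (Fin.last n) (-(x (Fin.last n))) j

lemma reflectZero_involutive :
    Function.Involutive (reflectZero : EuclideanSpace ℝ (Fin (n + 1)) → _) := by
  intro x
  ext j
  by_cases h : j = Fin.last n
  · subst h; simp [reflectZero_apply]
  · simp [reflectZero_apply, h]

lemma norm_reflectZero (x : EuclideanSpace ℝ (Fin (n + 1))) : ‖reflectZero x‖ = ‖x‖ := by
  rw [EuclideanSpace.norm_eq, EuclideanSpace.norm_eq]
  congr 1
  refine Finset.sum_congr rfl fun j _ => ?_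
  by_cases h : j = Fin.last n <;> simp [reflectZero_apply, h]

noncomputable def reflectZeroEquiv (n : ℕ) :
    EuclideanSpace ℝ (Fin (n + 1)) ≃ₗᵢ[ℝ] EuclideanSpace ℝ (Fin (n + 1)) where
  toFun := reflectZero
  invFun := reflectZero
  map_add' x y := by
    ext j
    simp only [reflectZero_apply, PiLp.add_apply]
    split_ifs <;> ring
  map_smul' c x := by
    ext j
    simp only [reflectZero_apply, PiLp.smul_apply, smul_eq_mul, RingHom.id_apply]
    split_ifs <;> ring
  left_inv := reflectZero_involutive
  right_inv := reflectZero_involutive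
  norm_map' := norm_reflectZero

lemma reflectZero_sub (x y : EuclideanSpace ℝ (Fin (n + 1))) :
    reflectZero (x - y) = reflectZero x - reflectZero y :=
  map_sub (reflectZeroEquiv n) x y

lemma measurePreserving_reflectZero :
    MeasurePreserving (reflectZero : EuclideanSpace ℝ (Fin (n + 1)) → _) :=
  (reflectZeroEquiv n).measurePreserving

lemma measurableEmbedding_reflectZero :
    MeasurableEmbedding (reflectZero : EuclideanSpace ℝ (Fin (n + 1)) → _) :=
  (reflectZeroEquiv n).toHomeomorph.measurableEmbedding

lemma image_reflectZero_image (s : Set (EuclideanSpace ℝ (Fin (n + 1)))) :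
    reflectZero '' (reflectZero '' s) = s := by
  simp only [image_image, reflectZero_involutive _, image_id']

lemma measurableSet_image_reflectZero {s : Set (EuclideanSpace ℝ (Fin (n + 1)))}
    (hs : MeasurableSet s) : MeasurableSet (reflectZero '' s) :=
  measurableEmbedding_reflectZero.measurableSet_image.2 hs

lemma norm_reflectZero_sub_lt_norm_sub {x y : EuclideanSpace ℝ (Fin (n + 1))}
    (hx : x (Fin.last n) < 0) (hy : 0 < y (Fin.last n)) :
    ‖reflectZero x - y‖ < ‖x - y‖ := by
  rw [EuclideanSpace.norm_eq, EuclideanSpace.norm_eq]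
  refine Real.sqrt_lt_sqrt (by positivity) (Finset.sum_lt_sum (fun j _ => ?_) ?_)
  · by_cases h : j = Fin.last n
    · subst h
      simp only [PiLp.sub_apply, reflectZero_apply, ↓reduceIte, Real.norm_eq_abs, sq_abs]
      nlinarith
    · simp [reflectZero_apply, h]
  · refine ⟨Fin.last n, Finset.mem_univ _, ?_⟩
    simp only [PiLp.sub_apply, reflectZero_apply, ↓reduceIte, Real.norm_eq_abs, sq_abs]
    nlinarith

end Reflection

section Curvature

variable {n : ℕ} {J : EuclideanSpace ℝ (Fin n) → ℝ}

lemma nonlocalCurvature_eq_integral_sub (hJ : Integrable J)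
    {Ω : Set (EuclideanSpace ℝ (Fin n))} (hΩ : MeasurableSet Ω) (x : EuclideanSpace ℝ (Fin n)) :
    nonlocalCurvature J Ω x = (∫ z, J z) - 2 * ∫ y in Ω, J (x - y) := by
  have hJx : Integrable fun y => J (x - y) := hJ.comp_sub_left x
  have hpt : ∀ y, J (x - y) * (Ωᶜ.indicator (fun _ => (1 : ℝ)) y - Ω.indicator (fun _ => 1) y)
      = J (x - y) - 2 * Ω.indicator (fun y => J (x - y)) y := by
    intro y
    by_cases hy : y ∈ Ω <;>
      simp only [mem_compl_iff, hy, not_true_eq_false, not_false_eq_true, indicator_of_mem,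
        indicator_of_notMem] <;>
      ring
  rw [nonlocalCurvature, funext hpt, integral_sub hJx ((hJx.indicator hΩ).const_mul 2),
    integral_const_mul, integral_indicator hΩ, integral_sub_left_eq_self]

end Curvature

section ReflectedCurvature

variable {n : ℕ} {J : EuclideanSpace ℝ (Fin (n + 1)) → ℝ}

lemma setIntegral_sub_reflectZero_of_image_eq (hJR : ∀ z, J (reflectZero z) = J z)
    {T : Set (EuclideanSpace ℝ (Fin (n + 1)))} (hT : reflectZero '' T = T)
    (x : EuclideanSpace ℝ (Fin (n + 1))) :
    ∫ y in T, J (x - y) = ∫ y in T, J (reflectZero x - y) := by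
  conv_lhs => rw [← hT, measurePreserving_reflectZero.setIntegral_image_emb
    measurableEmbedding_reflectZero]
  congr 1 with y
  rw [← hJR, reflectZero_sub, reflectZero_involutive]

lemma nonlocalCurvature_sub_reflectZero (hJ : Integrable J) (hJR : ∀ z, J (reflectZero z) = J z)
    {Ω : Set (EuclideanSpace ℝ (Fin (n + 1)))} (hΩ : MeasurableSet Ω)
    (x : EuclideanSpace ℝ (Fin (n + 1))) :
    nonlocalCurvature J Ω x - nonlocalCurvature J Ω (reflectZero x) =
      2 * ∫ y in Ω \ reflectZero '' Ω, (J (reflectZero x - y) - J (x - y)) := by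
  have hΩR : MeasurableSet (reflectZero '' Ω) := measurableSet_image_reflectZero hΩ
  have hsplit : ∀ x', ∫ y in Ω, J (x' - y) =
      (∫ y in Ω ∩ reflectZero '' Ω, J (x' - y)) + ∫ y in Ω \ reflectZero '' Ω, J (x' - y) :=
    fun x' => (integral_inter_add_sdiff hΩR (hJ.comp_sub_left x').integrableOn).symm
  have hsymm : reflectZero '' (Ω ∩ reflectZero '' Ω) = Ω ∩ reflectZero '' Ω := by
    rw [image_inter reflectZero_involutive.injective, image_reflectZero_image, inter_comm]
  rw [nonlocalCurvature_eq_integral_sub hJ hΩ, nonlocalCurvature_eq_integral_sub hJ hΩ,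
    hsplit x, hsplit (reflectZero x), setIntegral_sub_reflectZero_of_image_eq hJR hsymm x,
    integral_sub (hJ.comp_sub_left _).integrableOn (hJ.comp_sub_left x).integrableOn]
  ring

end ReflectedCurvature

section Profile

variable {μ : ℝ → ℝ} {r : ℝ}

lemma StrictAntiOn.lt_of_forall_ge_eq_zero (hμ : StrictAntiOn μ (Icc 0 r))
    (hμzero : ∀ s, r ≤ s → μ s = 0) {s t : ℝ} (hs : 0 ≤ s) (hsr : s < r) (hst : s < t) :
    μ t < μ s := by
  rcases le_or_gt t r with htr | hrt
  · exact hμ ⟨hs, hsr.le⟩ ⟨hs.trans hst.le, htr⟩ hst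
  · calc μ t = μ r := by rw [hμzero t hrt.le, hμzero r le_rfl]
      _ < μ s := hμ ⟨hs, hsr.le⟩ ⟨hs.trans hsr.le, le_rfl⟩ hsr

lemma StrictAntiOn.antitoneOn_Ici_of_forall_ge_eq_zero (hμ : StrictAntiOn μ (Icc 0 r))
    (hμzero : ∀ s, r ≤ s → μ s = 0) : AntitoneOn μ (Ici 0) := by
  intro s hs t _ hst
  rcases hst.eq_or_lt with rfl | hst
  · rfl
  rcases lt_or_ge s r with hsr | hrs
  · exact (hμ.lt_of_forall_ge_eq_zero hμzero hs hsr hst).le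
  · rw [hμzero t (hrs.trans hst.le), hμzero s hrs]

end Profile

lemma measure_inter_eq_zero_of_setIntegral_eq_zero {α : Type*} [MeasurableSpace α]
    {ν : Measure α} {f : α → ℝ} {s t : Set α} (hs : MeasurableSet s) (hf : IntegrableOn f s ν)
    (hf0 : ∀ x ∈ s, 0 ≤ f x) (hpos : ∀ x ∈ s ∩ t, 0 < f x) (h : ∫ x in s, f x ∂ν = 0) :
    ν (s ∩ t) = 0 := by
  have hae : f =ᵐ[ν.restrict s] 0 :=
    (setIntegral_eq_zero_iff_of_nonneg_ae ((ae_restrict_iff' hs).2 (ae_of_all _ hf0)) hf).1 h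
  have hzero : ∀ᵐ x ∂ν, x ∈ s → f x = 0 := (ae_restrict_iff' hs).1 hae
  refine measure_mono_null ?_ (ae_iff.1 hzero)
  exact fun x hx hx0 => (hpos x hx).ne' (hx0 hx.1)

theorem reflected_difference_null_strict_kernel_general
    {n : ℕ} (r : ℝ) (μ : ℝ → ℝ)
    (hμstrict : StrictAntiOn μ (Set.Icc 0 r)) (hμzero : ∀ s, r ≤ s → μ s = 0)
    (J : EuclideanSpace ℝ (Fin (n + 1)) → ℝ) (hJ : ∀ z, J z = μ ‖z‖) (hJint : Integrable J)
    (Ω : Set (EuclideanSpace ℝ (Fin (n + 1)))) (hΩ : MeasurableSet Ω)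
    (x₀ xt₀ : EuclideanSpace ℝ (Fin (n + 1))) (hxt : xt₀ = reflectZero x₀)
    (hx₀ : x₀ (Fin.last n) < 0)
    (hupper : ∀ y ∈ Ω \ (reflectZero '' Ω), 0 < y (Fin.last n))
    (hH : nonlocalCurvature J Ω x₀ = nonlocalCurvature J Ω xt₀) :
    volume ((Ω \ (reflectZero '' Ω)) ∩ ball xt₀ r) = 0 := by
  have hJR : ∀ z, J (reflectZero z) = J z := fun z => by rw [hJ, hJ, norm_reflectZero]
  have hcloser : ∀ y ∈ Ω \ reflectZero '' Ω, ‖xt₀ - y‖ < ‖x₀ - y‖ := fun y hy =>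
    hxt ▸ norm_reflectZero_sub_lt_norm_sub hx₀ (hupper y hy)
  have hint : ∫ y in Ω \ reflectZero '' Ω, (J (xt₀ - y) - J (x₀ - y)) = 0 := by
    have h := nonlocalCurvature_sub_reflectZero hJint hJR hΩ x₀
    rw [← hxt, hH, sub_self] at h
    linarith
  refine measure_inter_eq_zero_of_setIntegral_eq_zero (f := fun y => J (xt₀ - y) - J (x₀ - y))
    (hΩ.diff (measurableSet_image_reflectZero hΩ))
    ((hJint.comp_sub_left _).sub (hJint.comp_sub_left _)).integrableOn (fun y hy => ?_)
    (fun y hy => ?_) hint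
  · rw [hJ, hJ, sub_nonneg]
    exact hμstrict.antitoneOn_Ici_of_forall_ge_eq_zero hμzero (norm_nonneg _) (norm_nonneg _)
      (hcloser y hy).le
  · rw [hJ, hJ, sub_pos]
    refine hμstrict.lt_of_forall_ge_eq_zero hμzero (norm_nonneg _) ?_ (hcloser y hy.1)
    rw [← dist_eq_norm, dist_comm]
    exact hy.2

theorem reflected_difference_null_strict_kernel
    {n : ℕ} (r : ℝ) (hr : 0 < r) (μ : ℝ → ℝ)
    (hμstrict : StrictAntiOn μ (Set.Icc 0 r)) (hμzero : ∀ s, r ≤ s → μ s = 0)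
    (J : EuclideanSpace ℝ (Fin (n + 1)) → ℝ) (hJ : ∀ z, J z = μ ‖z‖) (hJint : Integrable J)
    (Ω : Set (EuclideanSpace ℝ (Fin (n + 1)))) (hΩ : MeasurableSet Ω)
    (hfin : volume Ω ≠ ⊤) (hbd : volume (frontier Ω) = 0)
    (x₀ xt₀ : EuclideanSpace ℝ (Fin (n + 1))) (hxt : xt₀ = reflectZero x₀)
    (hx₀ : x₀ (Fin.last n) < 0)
    (hupper : ∀ y ∈ Ω \ (reflectZero '' Ω), 0 < y (Fin.last n))
    (hH : nonlocalCurvature J Ω x₀ = nonlocalCurvature J Ω xt₀) :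
    volume ((Ω \ (reflectZero '' Ω)) ∩ ball xt₀ r) = 0 :=
  reflected_difference_null_strict_kernel_general r μ hμstrict hμzero J hJ hJint Ω hΩ x₀ xt₀ hxt hx₀
    hupper hH
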